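/- Let G be a finite group with center Z such that G/Z ≅ S₃ (the symmetric group on 3 letters) and |Z| ≥ 2. Then G has a 3-abelian partition: there exist x, y in G such that G = ⟨Z,x⟩ ⊎ Zy ⊎ Zyx ⊎ Zyx², where ⟨Z,x⟩ is abelian and each coset Zy, Zyx, Zyx² is a commuting subset of size > 1. -/

import Mathlib

/-!
Let `e : G → G/Z ≅ S₃` be the quotient map, whose kernel is the centre `Z`, and choose `x`, `y`
with `e x` a 3-cycle and `e y` a transposition. Then `⟨Z, x⟩ = e⁻¹(A₃)` and `Z w = e⁻¹{e w}`, so the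
partition of `S₃` into `A₃` and its three transpositions `e y`, `e (y x)`, `e (y x²)` pulls back to
a partition of `G`. The subgroup `⟨Z, w⟩` is abelian for every `w`, being generated by pairwise
commuting elements; it contains `Z w`, and `|Z w| = |Z| ≥ 2`.
-/

/-- A commuting subset of a group: all pairs of elements commute. -/
def IsCommSet {G : Type*} [Group G] (s : Set G) : Prop :=
  ∀ a ∈ s, ∀ b ∈ s, a * b = b * a

open Subgroup Equiv

theorem IsCommSet.mono {G : Type*} [Group G] {s t : Set G} (ht : IsCommSet t) (hst : s ⊆ t) :
    IsCommSet s := fun a ha b hb => ht a (hst ha) b (hst hb)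

theorem IsCommSet.closure {G : Type*} [Group G] {s : Set G} (hs : IsCommSet s) :
    IsCommSet (closure s : Set G) := fun a ha b hb =>
  congrArg Subtype.val ((isMulCommutative_closure hs).is_comm.comm ⟨a, ha⟩ ⟨b, hb⟩)

theorem isCommSet_insert_center {G : Type*} [Group G] (x : G) :
    IsCommSet (insert x (center G : Set G)) := by
  rintro a (rfl | ha) b (rfl | hb)
  · rfl
  · exact mem_center_iff.mp hb a
  · exact (mem_center_iff.mp ha b).symm
  · exact (mem_center_iff.mp ha b).symm

theorem isCommSet_image_mul_right_center {G : Type*} [Group G] (w : G) :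
    IsCommSet ((· * w) '' (center G : Set G)) := by
  refine (isCommSet_insert_center w).closure.mono ?_
  rintro _ ⟨z, hz, rfl⟩
  exact mul_mem (subset_closure (Set.mem_insert_of_mem w hz)) (subset_closure (Set.mem_insert w _))

theorem MonoidHom.closure_insert_ker {G H : Type*} [Group G] [Group H] (f : G →* H) (x : G) :
    closure (insert x (f.ker : Set G)) = (zpowers (f x)).comap f := by
  rw [Set.insert_eq, Subgroup.closure_union, closure_eq, ← comap_map_eq, map_closure,
    Set.image_singleton, zpowers_eq_closure]

theorem MonoidHom.image_mul_right_ker {G H : Type*} [Group G] [Group H] (f : G →* H) (w : G) :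
    (· * w) '' (f.ker : Set G) = f ⁻¹' {f w} := by
  ext g
  simp only [Set.mem_image, SetLike.mem_coe, MonoidHom.mem_ker, Set.mem_preimage,
    Set.mem_singleton_iff]
  constructor
  · rintro ⟨z, hz, rfl⟩
    rw [map_mul, hz, one_mul]
  · intro h
    exact ⟨g * w⁻¹, by rw [map_mul, map_inv, h, mul_inv_cancel], inv_mul_cancel_right g w⟩

def IsFourPartition {α : Type*} (A B₁ B₂ B₃ : Set α) : Prop :=
  Disjoint A B₁ ∧ Disjoint A B₂ ∧ Disjoint A B₃ ∧
    Disjoint B₁ B₂ ∧ Disjoint B₁ B₃ ∧ Disjoint B₂ B₃ ∧ A ∪ B₁ ∪ B₂ ∪ B₃ = Set.univ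

theorem IsFourPartition.preimage {α β : Type*} {A B₁ B₂ B₃ : Set β}
    (h : IsFourPartition A B₁ B₂ B₃) (f : α → β) :
    IsFourPartition (f ⁻¹' A) (f ⁻¹' B₁) (f ⁻¹' B₂) (f ⁻¹' B₃) := by
  obtain ⟨h₁, h₂, h₃, h₄, h₅, h₆, hcover⟩ := h
  refine ⟨h₁.preimage f, h₂.preimage f, h₃.preimage f, h₄.preimage f, h₅.preimage f,
    h₆.preimage f, ?_⟩
  simp only [← Set.preimage_union, hcover, Set.preimage_univ]

theorem zpowers_eq_alternatingGroup_fin_three {σ : Perm (Fin 3)} (hσ : σ.IsThreeCycle) :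
    zpowers σ = alternatingGroup (Fin 3) := by
  refine eq_of_le_of_card_ge (zpowers_le.mpr hσ.mem_alternatingGroup) ?_
  rw [Nat.card_zpowers, hσ.orderOf, nat_card_alternatingGroup, Nat.card_fin]
  rfl

theorem isFourPartition_alternatingGroup_fin_three :
    IsFourPartition (alternatingGroup (Fin 3) : Set (Perm (Fin 3))) {swap 0 1}
      {swap 0 1 * Fin.cycleRange 2} {swap 0 1 * Fin.cycleRange 2 * Fin.cycleRange 2} := by
  simp only [IsFourPartition, Set.disjoint_singleton_right,
    SetLike.mem_coe, Perm.mem_alternatingGroup, Set.eq_univ_iff_forall, Set.mem_union,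
    Set.mem_singleton_iff]
  decide

theorem three_abelian_partition_of_S3_general {G : Type*} [Group G]
    (hZ : 2 ≤ Nat.card (Subgroup.center G))
    (hiso : Nonempty ((G ⧸ Subgroup.center G) ≃* Equiv.Perm (Fin 3))) :
    ∃ x y : G,
      ((fun (A B₁ B₂ B₃ : Set G) =>
        IsCommSet A ∧ IsCommSet B₁ ∧ IsCommSet B₂ ∧ IsCommSet B₃ ∧
        1 < B₁.ncard ∧ 1 < B₂.ncard ∧ 1 < B₃.ncard ∧
        Disjoint A B₁ ∧ Disjoint A B₂ ∧ Disjoint A B₃ ∧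
        Disjoint B₁ B₂ ∧ Disjoint B₁ B₃ ∧ Disjoint B₂ B₃ ∧
        A ∪ B₁ ∪ B₂ ∪ B₃ = Set.univ)
      ((Subgroup.closure (insert x (Subgroup.center G : Set G)) : Subgroup G) : Set G)
      ((· * y) '' (Subgroup.center G : Set G))
      ((· * (y * x)) '' (Subgroup.center G : Set G))
      ((· * (y * x * x)) '' (Subgroup.center G : Set G))) := by
  obtain ⟨φ⟩ := hiso
  let e : G →* Perm (Fin 3) :=
    (φ : G ⧸ center G →* Perm (Fin 3)).comp (QuotientGroup.mk' (center G))
  have he : e.ker = center G := by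
    rw [MonoidHom.ker_mulEquiv_comp, QuotientGroup.ker_mk']
  have he_surj : Function.Surjective e := φ.surjective.comp (QuotientGroup.mk'_surjective _)
  obtain ⟨x, hx⟩ := he_surj (Fin.cycleRange 2)
  obtain ⟨y, hy⟩ := he_surj (swap 0 1)
  have hcard (w : G) : 1 < ((· * w) '' (center G : Set G)).ncard := by
    rwa [Set.ncard_image_of_injective _ (mul_left_injective w), ← Nat.card_coe_set_eq]
  refine ⟨x, y, (isCommSet_insert_center x).closure, isCommSet_image_mul_right_center _,
    isCommSet_image_mul_right_center _, isCommSet_image_mul_right_center _,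
    hcard _, hcard _, hcard _, ?_⟩
  have hpart := isFourPartition_alternatingGroup_fin_three.preimage e
  rw [← zpowers_eq_alternatingGroup_fin_three Fin.isThreeCycle_cycleRange_two] at hpart
  simp only [← he, e.closure_insert_ker, coe_comap, e.image_mul_right_ker, map_mul, hx, hy]
  exact hpart

/-- If `G` is a finite group with center `Z` of order at least 2 and `G/Z ≅ S₃`,
then `G` has a 3-abelian partition `G = ⟨Z,x⟩ ⊎ Zy ⊎ Zyx ⊎ Zyx²`, where `⟨Z,x⟩`
is abelian and each coset `Zy`, `Zyx`, `Zyx²` is a commuting set of size > 1. -/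
theorem three_abelian_partition_of_S3 {G : Type*} [Group G] [Finite G]
    (hZ : 2 ≤ Nat.card (Subgroup.center G))
    (hiso : Nonempty ((G ⧸ Subgroup.center G) ≃* Equiv.Perm (Fin 3))) :
    ∃ x y : G,
      ((fun (A B₁ B₂ B₃ : Set G) =>
        IsCommSet A ∧ IsCommSet B₁ ∧ IsCommSet B₂ ∧ IsCommSet B₃ ∧
        1 < B₁.ncard ∧ 1 < B₂.ncard ∧ 1 < B₃.ncard ∧
        Disjoint A B₁ ∧ Disjoint A B₂ ∧ Disjoint A B₃ ∧
        Disjoint B₁ B₂ ∧ Disjoint B₁ B₃ ∧ Disjoint B₂ B₃ ∧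
        A ∪ B₁ ∪ B₂ ∪ B₃ = Set.univ)
      ((Subgroup.closure (insert x (Subgroup.center G : Set G)) : Subgroup G) : Set G)
      ((· * y) '' (Subgroup.center G : Set G))
      ((· * (y * x)) '' (Subgroup.center G : Set G))
      ((· * (y * x * x)) '' (Subgroup.center G : Set G))) :=
  three_abelian_partition_of_S3_general hZ hiso
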